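/- arXiv:1507.04725 — 4 statements merged into one kernel-verified Lean document; each statement's English description precedes it below -/
import Mathlib

section
/- Let G be a d-regular graph with eigenvector A f = λ f, |λ| = 2√(d−1), and let θ = λ/2 (so θ² = d−1). Define T_θ f and T_{1+θ} f on directed edges by (T_c f)(x,y) = c f(y) − f(x). Then B(T_{1+θ} f) = θ·(T_{1+θ} f) + T_θ f, where B is the nonbacktracking operator. In particular, B has a 2×2 Jordan block for the eigenvalue θ. -/
open Finset

theorem SimpleGraph.IsRegularOfDegree.sum_erase_neighborFinset_mul_sub {V R : Type*}
    [DecidableEq V] [CommRing R] {G : SimpleGraph V} [G.LocallyFinite] {d : ℕ}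
    (hreg : G.IsRegularOfDegree d) {f : V → R} {μ : R}
    (hf : ∀ y, ∑ z ∈ G.neighborFinset y, f z = μ * f y) (c : R) {x y : V} (hxy : G.Adj x y) :
    ∑ z ∈ (G.neighborFinset y).erase x, (c * f z - f y)
      = (c * μ - d) * f y - (c * f x - f y) := by
  have hx : x ∈ G.neighborFinset y := (G.mem_neighborFinset y x).2 hxy.symm
  rw [sum_erase_eq_sub hx, sum_sub_distrib, ← mul_sum, hf y, sum_const,
    G.card_neighborFinset_eq_degree, hreg y, nsmul_eq_mul]
  ring

theorem nonbacktracking_jordan_block_general {V : Type*} [Fintype V] [DecidableEq V]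
    (G : SimpleGraph V) [DecidableRel G.Adj] (d : ℕ)
    (hreg : G.IsRegularOfDegree d) (θ : ℝ) (hθ : θ ^ 2 = (d : ℝ) - 1)
    (f : V → ℂ) (hf : ∀ y, ∑ z ∈ G.neighborFinset y, f z = (2 * θ : ℝ) * f y) :
    ∀ x y, G.Adj x y →
      ∑ z ∈ (G.neighborFinset y).erase x, ((1 + θ : ℂ) * f z - f y)
        = (θ : ℂ) * ((1 + θ : ℂ) * f y - f x) + ((θ : ℂ) * f y - f x) := by
  intro x y hxy
  have hdθ : (d : ℂ) = (θ : ℂ) ^ 2 + 1 := by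
    rw [eq_sub_iff_add_eq] at hθ
    exact_mod_cast hθ.symm
  rw [hreg.sum_erase_neighborFinset_mul_sub hf _ hxy, hdθ]
  push_cast
  -- with `μ = 2θ` and `d = θ² + 1` both sides equal `(θ² + 2θ) f y - (1 + θ) f x`
  ring

/-- Jordan block at the Ramanujan threshold: if `Af = λf` with `λ = 2θ`, `θ² = d−1`, then
`B(T_{1+θ} f) = θ·(T_{1+θ} f) + T_θ f`, where `B` is the nonbacktracking operator and
`(T_c f)(x,y) = c f(y) − f(x)`. -/
theorem nonbacktracking_jordan_block {V : Type*} [Fintype V] [DecidableEq V]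
    (G : SimpleGraph V) [DecidableRel G.Adj] (d : ℕ) (hd : 3 ≤ d)
    (hreg : G.IsRegularOfDegree d) (θ : ℝ) (hθ : θ ^ 2 = (d : ℝ) - 1)
    (f : V → ℂ) (hf : ∀ y, ∑ z ∈ G.neighborFinset y, f z = (2 * θ : ℝ) * f y) :
    ∀ x y, G.Adj x y →
      ∑ z ∈ (G.neighborFinset y).erase x, ((1 + θ : ℂ) * f z - f y)
        = (θ : ℂ) * ((1 + θ : ℂ) * f y - f x) + ((θ : ℂ) * f y - f x) :=
  nonbacktracking_jordan_block_general G d hreg θ hθ f hf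
end

section
/- Let G be a finite connected d-regular graph on n vertices (d ≥ 3) and define, for x ∈ V, the 'star vector' s⁻_x on directed edges by s⁻_x(u,v) = 1 if u = x, −1 if v = x, and 0 otherwise. Then the span S⁻ of {s⁻_x : x ∈ V} has dimension n − 1, and every w in the antisymmetric space {w : w(x,y) = −w(y,x)} that is orthogonal to S⁻ satisfies B w = w. -/
/-!
The gradient `g ↦ ((u, v) ↦ g u - g v)` sends the indicator of `x` to `s⁻_x`, so `S⁻` is its
range; on a connected graph its kernel is the constants, whence `dim S⁻ = n - 1`.
For antisymmetric `w`, `⟨s⁻_x, w⟩` is twice the sum of `w` over the edges leaving `x`, so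
orthogonality to `S⁻` makes every such sum vanish. Since `(B w)(u, v)` is the sum over the edges
leaving `v` minus `w (v, u) = -w (u, v)`, this gives `B w = w`.
-/

open Finset Matrix

/-- The nonbacktracking matrix `B` on directed edges of `G`. -/
def nbMatrix {V : Type*} (G : SimpleGraph V) [DecidableRel G.Adj] [DecidableEq V] :
    Matrix {e : V × V // G.Adj e.1 e.2} {e : V × V // G.Adj e.1 e.2} ℂ :=
  fun e e' => if e.1.2 = e'.1.1 ∧ e.1.1 ≠ e'.1.2 then 1 else 0

/-- The star vector `s⁻_x` on directed edges: `1` on edges out of `x`, `−1` on edges into `x`. -/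
def starMinus {V : Type*} [DecidableEq V] (G : SimpleGraph V) [DecidableRel G.Adj] (x : V) :
    {e : V × V // G.Adj e.1 e.2} → ℂ :=
  fun e => if e.1.1 = x then 1 else if e.1.2 = x then -1 else 0

namespace SimpleGraph

theorem Reachable.apply_eq_of_forall_adj {V α : Type*} {G : SimpleGraph V} {f : V → α}
    (hf : ∀ a b, G.Adj a b → f a = f b) {u v : V} (h : G.Reachable u v) : f u = f v := by
  obtain ⟨p⟩ := h
  induction p with
  | nil => rfl
  | cons hadj _ ih => exact (hf _ _ hadj).trans ih

variable {V : Type*} (G : SimpleGraph V)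

def edgeGradient : (V → ℂ) →ₗ[ℂ] ({e : V × V // G.Adj e.1 e.2} → ℂ) :=
  LinearMap.pi fun e =>
    LinearMap.proj (R := ℂ) (φ := fun _ : V => ℂ) e.1.1 - LinearMap.proj e.1.2

@[simp]
theorem edgeGradient_apply (g : V → ℂ) (e : {e : V × V // G.Adj e.1 e.2}) :
    G.edgeGradient g e = g e.1.1 - g e.1.2 :=
  rfl

theorem ker_edgeGradient (hconn : G.Connected) :
    LinearMap.ker G.edgeGradient = ℂ ∙ 1 := by
  ext g
  rw [LinearMap.mem_ker, Submodule.mem_span_singleton]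
  constructor
  · intro hg
    have hadj (a b : V) (h : G.Adj a b) : g a = g b := sub_eq_zero.1 (congrFun hg ⟨(a, b), h⟩)
    obtain ⟨v₀⟩ := hconn.nonempty
    exact ⟨g v₀, funext fun u => by simp [(hconn u v₀).apply_eq_of_forall_adj hadj]⟩
  · rintro ⟨c, rfl⟩
    ext e
    simp

variable [DecidableEq V] [DecidableRel G.Adj]

theorem edgeGradient_single (x : V) : G.edgeGradient (Pi.single x 1) = starMinus G x := by
  ext e
  have hne : e.1.1 ≠ e.1.2 := e.2.ne
  simp only [edgeGradient_apply, starMinus, Pi.single_apply]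
  split_ifs <;> simp_all

theorem range_edgeGradient [Finite V] :
    LinearMap.range G.edgeGradient = Submodule.span ℂ (Set.range (starMinus G)) := by
  rw [LinearMap.range_eq_map, ← (Pi.basisFun ℂ V).span_eq, Submodule.map_span,
    ← Set.range_comp]
  congr
  ext x : 1
  simp [edgeGradient_single]

theorem finrank_span_starMinus [Fintype V] (hconn : G.Connected) :
    Module.finrank ℂ (Submodule.span ℂ (Set.range (starMinus G))) = Fintype.card V - 1 := by
  have := hconn.nonempty
  have h := LinearMap.finrank_range_add_finrank_ker G.edgeGradient
  rw [range_edgeGradient, ker_edgeGradient G hconn, finrank_span_singleton one_ne_zero,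
    Module.finrank_fintype_fun_eq_card] at h
  omega

theorem starMinus_eq_sub (x : V) (e : {e : V × V // G.Adj e.1 e.2}) :
    starMinus G x e = (if e.1.1 = x then 1 else 0) - if e.1.2 = x then 1 else 0 := by
  have := e.2.ne
  unfold starMinus
  split_ifs <;> simp_all

variable [Fintype V]

theorem sum_starMinus_mul_eq_two_mul {w : {e : V × V // G.Adj e.1 e.2} → ℂ}
    (hanti : ∀ x y (h : G.Adj x y), w ⟨(x, y), h⟩ = -w ⟨(y, x), h.symm⟩) (x : V) :
    ∑ e, starRingEnd ℂ (starMinus G x e) * w e = 2 * ∑ e with e.1.1 = x, w e := by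
  let reverse : {e : V × V // G.Adj e.1 e.2} ≃ {e : V × V // G.Adj e.1 e.2} :=
    (Equiv.prodComm V V).subtypeEquiv fun _ => G.adj_comm _ _
  have hin : ∑ e, (if e.1.2 = x then w e else 0) = -∑ e, (if e.1.1 = x then w e else 0) := by
    rw [← reverse.sum_comp, ← sum_neg_distrib]
    refine sum_congr rfl fun ⟨(a, b), hab⟩ _ => ?_
    change (if a = x then w ⟨(b, a), hab.symm⟩ else 0) = _
    rw [hanti b a hab.symm, apply_ite Neg.neg, neg_zero]
  simp only [starMinus_eq_sub, map_sub, apply_ite (starRingEnd ℂ), map_one, map_zero, sub_mul,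
    ite_mul, one_mul, zero_mul, sum_sub_distrib, hin, sum_filter]
  ring

theorem nbMatrix_mulVec_apply (w : {e : V × V // G.Adj e.1 e.2} → ℂ) {u v : V} (h : G.Adj u v) :
    (nbMatrix G *ᵥ w) ⟨(u, v), h⟩ = ∑ e with e.1.1 = v ∧ e.1.2 ≠ u, w e := by
  simp only [mulVec, dotProduct, nbMatrix, sum_filter, ite_mul, one_mul, zero_mul]
  refine sum_congr rfl fun e _ => if_congr ?_ rfl rfl
  simp only [eq_comm, ne_comm]

theorem sum_out_eq_nbMatrix_mulVec_add (w : {e : V × V // G.Adj e.1 e.2} → ℂ) {u v : V}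
    (h : G.Adj u v) :
    ∑ e with e.1.1 = v, w e = (nbMatrix G *ᵥ w) ⟨(u, v), h⟩ + w ⟨(v, u), h.symm⟩ := by
  rw [nbMatrix_mulVec_apply, ← sum_erase_add _ _ (a := ⟨(v, u), h.symm⟩) (by simp)]
  congr 2
  ext e
  simp only [mem_erase, ne_eq, Subtype.ext_iff, Prod.ext_iff, not_and, mem_filter, mem_univ,
    true_and]
  tauto

end SimpleGraph

theorem star_space_minus_general {V : Type*} [Fintype V] [DecidableEq V]
    (G : SimpleGraph V) [DecidableRel G.Adj] (hconn : G.Connected) :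
    Module.finrank ℂ (Submodule.span ℂ (Set.range (starMinus G))) = Fintype.card V - 1 ∧
    ∀ w : {e : V × V // G.Adj e.1 e.2} → ℂ,
      (∀ x y (h : G.Adj x y), w ⟨(x, y), h⟩ = -w ⟨(y, x), h.symm⟩) →
      (∀ x : V, ∑ e, starRingEnd ℂ (starMinus G x e) * w e = 0) →
      (nbMatrix G).mulVec w = w := by
  refine ⟨G.finrank_span_starMinus hconn, fun w hanti horth => funext fun ⟨(u, v), h⟩ => ?_⟩
  have hout : ∑ e with e.1.1 = v, w e = 0 := by
    simpa using (G.sum_starMinus_mul_eq_two_mul hanti v).symm.trans (horth v)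
  linear_combination hout - G.sum_out_eq_nbMatrix_mulVec_add w h - hanti u v h

/-- The span of the star vectors `{s⁻_x}` has dimension `n − 1`, and every antisymmetric
`w` orthogonal to it satisfies `B w = w`. -/
theorem star_space_minus {V : Type*} [Fintype V] [DecidableEq V]
    (G : SimpleGraph V) [DecidableRel G.Adj] (d : ℕ) (hd : 3 ≤ d)
    (hreg : G.IsRegularOfDegree d) (hconn : G.Connected) :
    Module.finrank ℂ (Submodule.span ℂ (Set.range (starMinus G))) = Fintype.card V - 1 ∧
    ∀ w : {e : V × V // G.Adj e.1 e.2} → ℂ,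
      (∀ x y (h : G.Adj x y), w ⟨(x, y), h⟩ = -w ⟨(y, x), h.symm⟩) →
      (∀ x : V, ∑ e, starRingEnd ℂ (starMinus G x e) * w e = 0) →
      (nbMatrix G).mulVec w = w :=
  star_space_minus_general G hconn
end

section
/- Let G be a finite connected d-regular graph on n vertices (d ≥ 3) and define, for x ∈ V, s⁺_x(u,v) = 1 if u = x or v = x, and 0 otherwise. Then every w in the symmetric space {w : w(x,y) = w(y,x)} orthogonal to the span of {s⁺_x : x ∈ V} satisfies B w = −w; and the span of {s⁺_x} has dimension n if G is non-bipartite and n−1 if G is bipartite. -/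
/-!
Since `(Σ_x a_x s⁺_x)(u, v) = a u + a v`, a linear dependence among the `s⁺_x` is a vertex
function negated along every edge. On a connected graph such a function equals `± a x₀`, the
sign being the parity of walks from `x₀`. With a bipartition it is therefore a multiple of the
`±1` colour vector; without one it vanishes, for if `a z ≠ 0` then `x ↦ (a x = a z)` would be a
proper 2-colouring. Rank–nullity gives the dimension of the span.

For symmetric `w` orthogonal to `s⁺_y`, the sums of `w` over the edges leaving and entering `y`
agree and add up to `0`, so both vanish; `(B w)(x, y)` is the sum over the edges leaving `y` minus
`w (y, x) = w (x, y)`.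
-/

open Finset Matrix

/-- The star vector `s⁺_x` on directed edges: `1` on edges out of or into `x`, `0` otherwise. -/
def starPlus {V : Type*} [DecidableEq V] (G : SimpleGraph V) [DecidableRel G.Adj] (x : V) :
    {e : V × V // G.Adj e.1 e.2} → ℂ :=
  fun e => if e.1.1 = x then 1 else if e.1.2 = x then 1 else 0

namespace SimpleGraph

variable {V R : Type*} {G : SimpleGraph V} {a : V → R}

theorem Walk.apply_eq_ite_even [AddGroup R] (ha : ∀ x y, G.Adj x y → a x + a y = 0)
    {u v : V} (p : G.Walk u v) : a v = if Even p.length then a u else -a u := by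
  induction p with
  | nil => simp
  | @cons u w v huw p ih =>
    rw [ih, eq_neg_of_add_eq_zero_right (ha u w huw)]
    simp only [Walk.length_cons, Nat.even_add_one]
    split_ifs <;> simp

theorem Connected.apply_eq_ite_color [AddGroup R] (hG : G.Connected) (c : V → Bool)
    (hc : ∀ x y, G.Adj x y → c x ≠ c y) (ha : ∀ x y, G.Adj x y → a x + a y = 0) (u v : V) :
    a v = if c v = c u then a u else -a u := by
  obtain ⟨p⟩ := hG.preconnected u v
  have hparity := (Coloring.mk c fun h => hc _ _ h).even_length_iff_congr p
  rw [p.apply_eq_ite_even ha]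
  simp only [Coloring.mk, RelHom.coeFn_mk, ← Bool.eq_iff_iff] at hparity
  simp only [hparity, eq_comm]

theorem Connected.eq_zero_of_add_eq_zero_of_not_bipartite [AddGroup R] [IsAddTorsionFree R]
    (hG : G.Connected) (hbip : ¬∃ c : V → Bool, ∀ x y, G.Adj x y → c x ≠ c y)
    (ha : ∀ x y, G.Adj x y → a x + a y = 0) : a = 0 := by
  classical
  by_contra hne
  obtain ⟨z, hz⟩ := Function.ne_iff.mp hne
  have hz_ne_neg : a z ≠ -a z := fun h => hz (self_eq_neg.mp h)
  refine hbip ⟨fun x => decide (a x = a z), fun x y hxy => ?_⟩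
  obtain ⟨p⟩ := hG.preconnected z x
  have hy := eq_neg_of_add_eq_zero_right (ha x y hxy)
  have hx := p.apply_eq_ite_even ha
  simp only [ne_eq, decide_eq_decide, hy, hx]
  split_ifs <;> simp_all [eq_comm (a := -a z)]

end SimpleGraph

section StarVectors

variable {V : Type*} [DecidableEq V] {G : SimpleGraph V} [DecidableRel G.Adj]

theorem starPlus_apply (x : V) (e : {e : V × V // G.Adj e.1 e.2}) :
    starPlus G x e = (if e.1.1 = x then 1 else 0) + (if e.1.2 = x then 1 else 0) := by
  have hloop : e.1.1 ≠ e.1.2 := e.2.ne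
  unfold starPlus
  split_ifs <;> simp_all

variable [Fintype V]

theorem linearCombination_starPlus_apply (a : V → ℂ) (e : {e : V × V // G.Adj e.1 e.2}) :
    Fintype.linearCombination ℂ (starPlus G) a e = a e.1.1 + a e.1.2 := by
  simp [Fintype.linearCombination_apply, starPlus_apply, mul_add, sum_add_distrib]

theorem mem_ker_linearCombination_starPlus {a : V → ℂ} :
    a ∈ LinearMap.ker (Fintype.linearCombination ℂ (starPlus G)) ↔
      ∀ x y, G.Adj x y → a x + a y = 0 := by
  simp only [LinearMap.mem_ker, funext_iff, linearCombination_starPlus_apply, Pi.zero_apply,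
    Subtype.forall]
  exact ⟨fun h x y hxy => h (x, y) hxy, fun h e he => h _ _ he⟩

theorem finrank_span_starPlus_add_finrank_ker :
    Module.finrank ℂ (Submodule.span ℂ (Set.range (starPlus G))) +
      Module.finrank ℂ (LinearMap.ker (Fintype.linearCombination ℂ (starPlus G))) =
      Fintype.card V := by
  rw [← Fintype.range_linearCombination, LinearMap.finrank_range_add_finrank_ker,
    Module.finrank_fintype_fun_eq_card]

theorem ker_linearCombination_starPlus_eq_span (hG : G.Connected) (c : V → Bool)
    (hc : ∀ x y, G.Adj x y → c x ≠ c y) (u : V) :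
    LinearMap.ker (Fintype.linearCombination ℂ (starPlus G)) =
      ℂ ∙ fun x => if c x = c u then 1 else -1 := by
  refine le_antisymm (fun a ha => Submodule.mem_span_singleton.mpr ⟨a u, ?_⟩) ?_
  · funext v
    rw [hG.apply_eq_ite_color c hc (mem_ker_linearCombination_starPlus.mp ha) u v]
    split_ifs with h <;> simp [h]
  · refine (Submodule.span_singleton_le_iff_mem _ _).mpr
      (mem_ker_linearCombination_starPlus.mpr fun x y hxy => ?_)
    have hcxy := hc x y hxy
    cases hx : c x <;> cases hy : c y <;> cases c u <;> simp_all

theorem ker_linearCombination_starPlus_eq_bot (hG : G.Connected)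
    (hbip : ¬∃ c : V → Bool, ∀ x y, G.Adj x y → c x ≠ c y) :
    LinearMap.ker (Fintype.linearCombination ℂ (starPlus G)) = ⊥ :=
  (Submodule.eq_bot_iff _).mpr fun _ ha =>
    hG.eq_zero_of_add_eq_zero_of_not_bipartite hbip (mem_ker_linearCombination_starPlus.mp ha)

end StarVectors

section Nonbacktracking

variable {V : Type*} [Fintype V] [DecidableEq V] {G : SimpleGraph V} [DecidableRel G.Adj]

theorem sum_conj_starPlus_mul (x : V) (w : {e : V × V // G.Adj e.1 e.2} → ℂ) :
    ∑ e, starRingEnd ℂ (starPlus G x e) * w e =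
      ∑ e with e.1.1 = x, w e + ∑ e with e.1.2 = x, w e := by
  simp [starPlus_apply, add_mul, sum_add_distrib, sum_filter]

theorem sum_filter_snd_eq_sum_filter_fst {w : {e : V × V // G.Adj e.1 e.2} → ℂ}
    (hsym : ∀ x y (h : G.Adj x y), w ⟨(x, y), h⟩ = w ⟨(y, x), h.symm⟩) (x : V) :
    ∑ e with e.1.2 = x, w e = ∑ e with e.1.1 = x, w e :=
  sum_nbij' (fun e => ⟨e.1.swap, e.2.symm⟩) (fun e => ⟨e.1.swap, e.2.symm⟩)
    (by simp) (by simp) (fun _ _ => rfl) (fun _ _ => rfl) (fun e _ => hsym _ _ e.2)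

theorem nbMatrix_mulVec_apply (w : {e : V × V // G.Adj e.1 e.2} → ℂ) {x y : V} (h : G.Adj x y) :
    (nbMatrix G *ᵥ w) ⟨(x, y), h⟩ = ∑ e with e.1.1 = y, w e - w ⟨(y, x), h.symm⟩ := by
  have hback : (⟨(y, x), h.symm⟩ : {e : V × V // G.Adj e.1 e.2}) ∈
      ({e | e.1.1 = y} : Finset _) := by
    simp
  simp only [← sum_erase_eq_sub hback, mulVec, dotProduct, nbMatrix, ite_mul, one_mul, zero_mul,
    ← sum_filter]
  congr 1
  ext ⟨⟨u, v⟩, huv⟩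
  simp only [mem_filter, mem_univ, true_and, mem_erase, ne_eq, Subtype.mk.injEq, Prod.mk.injEq]
  tauto

theorem nbMatrix_mulVec_eq_neg {w : {e : V × V // G.Adj e.1 e.2} → ℂ}
    (hsym : ∀ x y (h : G.Adj x y), w ⟨(x, y), h⟩ = w ⟨(y, x), h.symm⟩)
    (horth : ∀ x : V, ∑ e, starRingEnd ℂ (starPlus G x e) * w e = 0) :
    nbMatrix G *ᵥ w = -w := by
  have hout (y : V) : ∑ e with e.1.1 = y, w e = 0 := by
    have hy := horth y
    rwa [sum_conj_starPlus_mul, sum_filter_snd_eq_sum_filter_fst hsym, add_self_eq_zero] at hy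
  funext ⟨(x, y), h⟩
  rw [nbMatrix_mulVec_apply, hout, zero_sub, Pi.neg_apply, hsym]

end Nonbacktracking

theorem star_space_plus_general {V : Type*} [Fintype V] [DecidableEq V]
    (G : SimpleGraph V) [DecidableRel G.Adj] (hconn : G.Connected) :
    (∀ w : {e : V × V // G.Adj e.1 e.2} → ℂ,
      (∀ x y (h : G.Adj x y), w ⟨(x, y), h⟩ = w ⟨(y, x), h.symm⟩) →
      (∀ x : V, ∑ e, starRingEnd ℂ (starPlus G x e) * w e = 0) →
      (nbMatrix G).mulVec w = -w) ∧
    ((∃ c : V → Bool, ∀ x y, G.Adj x y → c x ≠ c y) →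
      Module.finrank ℂ (Submodule.span ℂ (Set.range (starPlus G))) = Fintype.card V - 1) ∧
    (¬(∃ c : V → Bool, ∀ x y, G.Adj x y → c x ≠ c y) →
      Module.finrank ℂ (Submodule.span ℂ (Set.range (starPlus G))) = Fintype.card V) := by
  have hrank := finrank_span_starPlus_add_finrank_ker (G := G)
  refine ⟨fun w hsym horth => nbMatrix_mulVec_eq_neg hsym horth, ?_, fun hbip => ?_⟩
  · rintro ⟨c, hc⟩
    obtain ⟨u⟩ := hconn.nonempty
    have hsign : (fun x => if c x = c u then 1 else -1 : V → ℂ) ≠ 0 :=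
      Function.ne_iff.mpr ⟨u, by simp⟩
    rw [ker_linearCombination_starPlus_eq_span hconn c hc u, finrank_span_singleton hsign] at hrank
    omega
  · rw [ker_linearCombination_starPlus_eq_bot hconn hbip, finrank_bot] at hrank
    omega

/-- Every symmetric `w` orthogonal to the span of `{s⁺_x}` satisfies `B w = −w`; and that
span has dimension `n−1` if `G` is bipartite and `n` otherwise. -/
theorem star_space_plus {V : Type*} [Fintype V] [DecidableEq V]
    (G : SimpleGraph V) [DecidableRel G.Adj] (d : ℕ) (hd : 3 ≤ d)
    (hreg : G.IsRegularOfDegree d) (hconn : G.Connected) :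
    (∀ w : {e : V × V // G.Adj e.1 e.2} → ℂ,
      (∀ x y (h : G.Adj x y), w ⟨(x, y), h⟩ = w ⟨(y, x), h.symm⟩) →
      (∀ x : V, ∑ e, starRingEnd ℂ (starPlus G x e) * w e = 0) →
      (nbMatrix G).mulVec w = -w) ∧
    ((∃ c : V → Bool, ∀ x y, G.Adj x y → c x ≠ c y) →
      Module.finrank ℂ (Submodule.span ℂ (Set.range (starPlus G))) = Fintype.card V - 1) ∧
    (¬(∃ c : V → Bool, ∀ x y, G.Adj x y → c x ≠ c y) →
      Module.finrank ℂ (Submodule.span ℂ (Set.range (starPlus G))) = Fintype.card V) :=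
  star_space_plus_general G hconn
end

section
/- Let G be a finite d-regular graph, B its nonbacktracking operator, and C := (d−1)·B^{-1} + B. Then B is invertible, C is symmetric, and explicitly C_{(u,v),(x,y)} = 1 if (v = x and u ≠ y) or (y = u and v ≠ x), C_{(u,v),(x,y)} = −(d−2) if (u,v) = (y,x), and 0 otherwise. -/
/-!
Write `B = T - R`, where `T e f = 1` iff the head of `e` is the tail of `f`, and `R` is the
permutation matrix of edge reversal. With `H e f = 1` iff `e` and `f` have the same head,
`d`-regularity gives `T Tᵀ = d H`, while `T R = R Tᵀ = H` and `R² = 1`; hence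
`B ((d - 1)⁻¹ Tᵀ - R) = 1`, and `(d - 1) B⁻¹ + B = T + Tᵀ - d R`, which is visibly symmetric.
-/

open Finset Matrix

/-- The nonbacktracking matrix `B` (real entries) on directed edges of `G`. -/
def nbMatrixR {V : Type*} (G : SimpleGraph V) [DecidableRel G.Adj] [DecidableEq V] :
    Matrix {e : V × V // G.Adj e.1 e.2} {e : V × V // G.Adj e.1 e.2} ℝ :=
  fun e e' => if e.1.2 = e'.1.1 ∧ e.1.1 ≠ e'.1.2 then 1 else 0

namespace SimpleGraph

variable {V : Type*} (G : SimpleGraph V)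

def edgeReverse : Equiv.Perm {e : V × V // G.Adj e.1 e.2} where
  toFun e := ⟨e.1.swap, e.2.symm⟩
  invFun e := ⟨e.1.swap, e.2.symm⟩
  left_inv _ := rfl
  right_inv _ := rfl

@[simp]
lemma coe_edgeReverse_apply (e : {e : V × V // G.Adj e.1 e.2}) :
    (G.edgeReverse e : V × V) = e.1.swap :=
  rfl

@[simp]
lemma edgeReverse_symm : G.edgeReverse.symm = G.edgeReverse :=
  rfl

lemma edgeReverse_mul_self : G.edgeReverse * G.edgeReverse = 1 :=
  rfl

variable [DecidableEq V]

def headTailMatrix : Matrix {e : V × V // G.Adj e.1 e.2} {e : V × V // G.Adj e.1 e.2} ℝ :=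
  fun e f => if e.1.2 = f.1.1 then 1 else 0

def headHeadMatrix : Matrix {e : V × V // G.Adj e.1 e.2} {e : V × V // G.Adj e.1 e.2} ℝ :=
  fun e f => if e.1.2 = f.1.2 then 1 else 0

abbrev reverseMatrix : Matrix {e : V × V // G.Adj e.1 e.2} {e : V × V // G.Adj e.1 e.2} ℝ :=
  G.edgeReverse.permMatrix ℝ

lemma reverseMatrix_apply (e f : {e : V × V // G.Adj e.1 e.2}) :
    G.reverseMatrix e f = if f.1 = e.1.swap then 1 else 0 := by
  simp [Subtype.ext_iff, eq_comm]

lemma nbMatrixR_eq_headTailMatrix_sub_reverseMatrix [DecidableRel G.Adj] :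
    nbMatrixR G = G.headTailMatrix - G.reverseMatrix := by
  ext ⟨⟨u, v⟩, huv⟩ ⟨⟨x, y⟩, hxy⟩
  simp only [nbMatrixR, headTailMatrix, Matrix.sub_apply, reverseMatrix_apply, Prod.swap_prod_mk,
    Prod.mk.injEq]
  by_cases hvx : v = x <;> by_cases huy : u = y <;> simp [hvx, huy, eq_comm]

lemma reverseMatrix_isSymm : G.reverseMatrix.IsSymm := by
  rw [IsSymm, transpose_permMatrix, Equiv.Perm.inv_def, edgeReverse_symm]

lemma headTailMatrix_add_transpose_sub_smul_reverseMatrix_apply (r : ℝ)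
    (e f : {e : V × V // G.Adj e.1 e.2}) :
    (G.headTailMatrix + G.headTailMatrixᵀ - r • G.reverseMatrix) e f =
      if (e.1.2 = f.1.1 ∧ e.1.1 ≠ f.1.2) ∨ (f.1.2 = e.1.1 ∧ e.1.2 ≠ f.1.1) then 1
      else if e.1.1 = f.1.2 ∧ e.1.2 = f.1.1 then -(r - 2)
      else 0 := by
  obtain ⟨⟨u, v⟩, huv⟩ := e
  obtain ⟨⟨x, y⟩, hxy⟩ := f
  simp only [Matrix.add_apply, Matrix.sub_apply, Matrix.smul_apply, transpose_apply,
    headTailMatrix, reverseMatrix_apply, Prod.swap_prod_mk, Prod.mk.injEq, smul_eq_mul]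
  by_cases hvx : v = x <;> by_cases huy : u = y <;> simp [hvx, huy, eq_comm, one_add_one_eq_two]

variable [Fintype V] [DecidableRel G.Adj]

lemma reverseMatrix_mul_self : G.reverseMatrix * G.reverseMatrix = 1 := by
  rw [← permMatrix_mul, edgeReverse_mul_self, permMatrix_one]

lemma card_filter_fst_eq_degree (v : V) :
    #{f : {e : V × V // G.Adj e.1 e.2} | f.1.1 = v} = G.degree v := by
  rw [← card_neighborFinset_eq_degree]
  refine card_bij' (fun f _ => f.1.2) (fun w hw => ⟨(v, w), by simpa using hw⟩) ?_ ?_ ?_ ?_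
  · rintro ⟨⟨u, w⟩, h⟩ hf
    obtain rfl : u = v := by simpa using hf
    simpa using h
  · simp
  · rintro ⟨⟨u, w⟩, h⟩ hf
    obtain rfl : u = v := by simpa using hf
    rfl
  · simp

lemma headTailMatrix_mul_transpose {d : ℕ} (hreg : G.IsRegularOfDegree d) :
    G.headTailMatrix * G.headTailMatrixᵀ = (d : ℝ) • G.headHeadMatrix := by
  ext e g
  have hdeg : ∑ f : {e : V × V // G.Adj e.1 e.2}, G.headTailMatrix e f = d := by
    simp [headTailMatrix, sum_boole, eq_comm, card_filter_fst_eq_degree, hreg.degree_eq]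
  have hterm : ∀ f, G.headTailMatrix e f * G.headTailMatrix g f =
      G.headHeadMatrix e g * G.headTailMatrix e f := by
    intro f
    simp only [headTailMatrix, headHeadMatrix]
    split_ifs <;> simp_all
  simp only [mul_apply, transpose_apply, hterm, ← mul_sum, hdeg, Matrix.smul_apply, smul_eq_mul,
    mul_comm]

lemma headTailMatrix_mul_reverseMatrix :
    G.headTailMatrix * G.reverseMatrix = G.headHeadMatrix := by
  rw [reverseMatrix, PEquiv.mul_toMatrix_toPEquiv]
  ext e g
  rfl

lemma reverseMatrix_mul_transpose_headTailMatrix :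
    G.reverseMatrix * G.headTailMatrixᵀ = G.headHeadMatrix := by
  rw [reverseMatrix, PEquiv.toMatrix_toPEquiv_mul]
  ext e g
  simp [headTailMatrix, headHeadMatrix, eq_comm]

lemma nbMatrixR_mul_eq_one {d : ℕ} (hd : d ≠ 1) (hreg : G.IsRegularOfDegree d) :
    nbMatrixR G * (((d : ℝ) - 1)⁻¹ • G.headTailMatrixᵀ - G.reverseMatrix) = 1 := by
  have hd' : (d : ℝ) - 1 ≠ 0 := sub_ne_zero.2 (mod_cast hd)
  rw [nbMatrixR_eq_headTailMatrix_sub_reverseMatrix, sub_mul, mul_sub, mul_sub, mul_smul_comm,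
    mul_smul_comm, headTailMatrix_mul_transpose G hreg, headTailMatrix_mul_reverseMatrix,
    reverseMatrix_mul_transpose_headTailMatrix, reverseMatrix_mul_self]
  match_scalars
  · field_simp
    ring
  · norm_num

end SimpleGraph

/-- `B` is invertible, and `C := (d−1)B⁻¹ + B` is symmetric with explicit entries:
`1` if `(v=x ∧ u≠y)` or `(y=u ∧ v≠x)`, `−(d−2)` if `(u,v)=(y,x)`, and `0` otherwise. -/
theorem symmetrized_nonbacktracking {V : Type*} [Fintype V] [DecidableEq V]
    (G : SimpleGraph V) [DecidableRel G.Adj] (d : ℕ) (hd : 3 ≤ d)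
    (hreg : G.IsRegularOfDegree d) :
    IsUnit (nbMatrixR G) ∧
    ((d - 1 : ℝ) • (nbMatrixR G)⁻¹ + nbMatrixR G).IsSymm ∧
    (∀ e e' : {e : V × V // G.Adj e.1 e.2},
      ((d - 1 : ℝ) • (nbMatrixR G)⁻¹ + nbMatrixR G) e e' =
        if (e.1.2 = e'.1.1 ∧ e.1.1 ≠ e'.1.2) ∨ (e'.1.2 = e.1.1 ∧ e.1.2 ≠ e'.1.1) then 1
        else if e.1.1 = e'.1.2 ∧ e.1.2 = e'.1.1 then -(d - 2 : ℝ)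
        else 0) := by
  have hd1 : d ≠ 1 := by omega
  have hmul := G.nbMatrixR_mul_eq_one hd1 hreg
  have hC : (d - 1 : ℝ) • (nbMatrixR G)⁻¹ + nbMatrixR G =
      G.headTailMatrix + G.headTailMatrixᵀ - (d : ℝ) • G.reverseMatrix := by
    rw [inv_eq_right_inv hmul, G.nbMatrixR_eq_headTailMatrix_sub_reverseMatrix, smul_sub,
      smul_smul, mul_inv_cancel₀ (sub_ne_zero.2 (mod_cast hd1)), one_smul]
    module
  refine ⟨IsUnit.of_mul_eq_one _ hmul, ?_, fun e e' => ?_⟩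
  · rw [hC]
    exact (isSymm_add_transpose_self _).sub (G.reverseMatrix_isSymm.smul _)
  · rw [hC, G.headTailMatrix_add_transpose_sub_smul_reverseMatrix_apply]
end
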